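/- For permutations u, v ∈ S_n, u ≤ v in the Bruhat order if and only if for all 1 ≤ j ≤ n and all t such that s_t is a right descent of u (i.e. u(t) > u(t+1)), one has |{r ∈ u([t]) : r < j}| ≥ |{r ∈ v([t]) : r < j}|. -/

import Mathlib

open Finset Polynomial

/-- The inversion number (Coxeter length) of a permutation of `ℕ`, counted on `{1, …, n}`. -/
def invNum (n : ℕ) (u : Equiv.Perm ℕ) : ℕ :=
  (((Finset.Icc 1 n) ×ˢ (Finset.Icc 1 n)).filter
    (fun p => p.1 < p.2 ∧ u p.2 < u p.1)).card

/-- `u` is a member of `S_n`: it fixes every point outside `{1, …, n}`. -/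
def IsPermOn (n : ℕ) (u : Equiv.Perm ℕ) : Prop :=
  ∀ m, m ∉ Finset.Icc 1 n → u m = m

/-- The adjacent transposition `s_i`, interchanging `i` and `i + 1`. -/
def sAdj (i : ℕ) : Equiv.Perm ℕ := Equiv.swap i (i + 1)

/-- The Bruhat order on `S_n`: `u ≤ v` iff `v` is obtained from `u` by successively
multiplying on the right by transpositions, increasing the length at each step. -/
def BruhatLE (n : ℕ) (u v : Equiv.Perm ℕ) : Prop :=
  Relation.ReflTransGen
    (fun a b => invNum n a < invNum n b ∧
      ∃ i j, 1 ≤ i ∧ i < j ∧ j ≤ n ∧ b = a * Equiv.swap i j) u v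

/-- `(S_n)^J`, the minimal coset representatives, where `J = S \ {s_e : e ∈ E}`. -/
def MinReps (n : ℕ) (E : Set ℕ) (u : Equiv.Perm ℕ) : Prop :=
  ∀ j, 1 ≤ j → j ≤ n - 1 → j ∉ E → invNum n u < invNum n (sAdj j * u)

/-- `|{r ∈ u⁻¹([m]) : r < j}|`, the number of positions `r < j` of `u` holding
an element of `{1, …, m}`. -/
def posLT (n m j : ℕ) (u : Equiv.Perm ℕ) : ℕ :=
  ((Finset.Icc 1 n).filter (fun r => r < j ∧ u r ∈ Finset.Icc 1 m)).card

/-- Deodhar's recursion with `x = q` for the parabolic `R`-polynomials of `S_n`,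
for `J = S \ {s_e : e ∈ E}`. -/
def IsRFamilyQ (n : ℕ) (E : Set ℕ)
    (R : Equiv.Perm ℕ → Equiv.Perm ℕ → Polynomial ℤ) : Prop :=
  (∀ u v, MinReps n E u → MinReps n E v → ¬ BruhatLE n u v → R u v = 0) ∧
  (∀ u, MinReps n E u → R u u = 1) ∧
  (∀ u v, MinReps n E u → MinReps n E v → BruhatLE n u v → u ≠ v →
    ∀ j, 1 ≤ j → j ≤ n - 1 → v (j + 1) < v j →
      ((u (j + 1) < u j → R u v = R (u * sAdj j) (v * sAdj j)) ∧
       (¬ u (j + 1) < u j → MinReps n E (u * sAdj j) →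
          R u v = X * R (u * sAdj j) (v * sAdj j) + (X - 1) * R u (v * sAdj j)) ∧
       (¬ u (j + 1) < u j → ¬ MinReps n E (u * sAdj j) →
          R u v = - R u (v * sAdj j))))

/-!
Write `prefixCount w t m` for the number of positions `p ≤ t` with `w p < m`; that these counts
for `u` dominate those for `v` is Ehresmann's tableau criterion. Right multiplication by a
transposition `(i j)`, `i < j`, raises the length exactly when `w i < w j`, and then it can only
lower the counts, which gives `⇒`.

Conversely, fix `m`. At a position `t` that is not a descent of `u`, the inequality propagates
from the ends of the ascending run of `u` through `t` (descents, where it is assumed, or `0` and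
`n`, where the counts agree): if `m ≤ u (t + 1)`, then `u ≥ m` on the rest of the run, so moving
right the count of `u` stays put while that of `v` cannot drop; if `u (t + 1) < m`, moving left
the count of `u` drops by one at every step and that of `v` by at most one. Finally, if the counts
of `u` dominate those of `v ≠ u`, let `i` be the first position where they differ and `j > i` the
first position with `u i < u j ≤ v i`; then `u * (i j)` is longer than `u` and its counts still
dominate those of `v`, so induction on the length reaches `v`.
-/

def prefixCount (w : Equiv.Perm ℕ) (t m : ℕ) : ℕ := #{p ∈ Icc 1 t | w p < m}

def TableauLE (n : ℕ) (u v : Equiv.Perm ℕ) : Prop :=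
  ∀ t ≤ n, ∀ m, prefixCount v t m ≤ prefixCount u t m

namespace IsPermOn

variable {n : ℕ} {w : Equiv.Perm ℕ}

lemma apply_mem_Icc (hw : IsPermOn n w) {p : ℕ} (hp : p ∈ Icc 1 n) : w p ∈ Icc 1 n := by
  by_contra h
  exact h ((w.injective (hw _ h)).symm ▸ hp)

lemma inv (hw : IsPermOn n w) : IsPermOn n w⁻¹ := fun m hm => by
  rw [Equiv.Perm.inv_eq_iff_eq, hw m hm]

lemma mul_swap (hw : IsPermOn n w) {i j : ℕ} (hi : i ∈ Icc 1 n) (hj : j ∈ Icc 1 n) :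
    IsPermOn n (w * Equiv.swap i j) := fun m hm => by
  rw [Equiv.Perm.mul_apply, Equiv.swap_apply_of_ne_of_ne (by grind) (by grind), hw m hm]

lemma image_Icc (hw : IsPermOn n w) : (Icc 1 n).image w = Icc 1 n :=
  eq_of_subset_of_card_le
    (fun _ hx => by obtain ⟨p, hp, rfl⟩ := mem_image.1 hx; exact hw.apply_mem_Icc hp)
    (card_image_of_injective _ w.injective).ge

lemma mem_Icc_of_apply_ne {v : Equiv.Perm ℕ} (hw : IsPermOn n w) (hv : IsPermOn n v) {p : ℕ}
    (h : w p ≠ v p) : p ∈ Icc 1 n := by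
  by_contra hp
  exact h (by rw [hw p hp, hv p hp])

end IsPermOn

lemma invNum_le (n : ℕ) (w : Equiv.Perm ℕ) : invNum n w ≤ n * n :=
  (card_filter_le _ _).trans (by simp)

lemma invNum_lt_invNum_mul_swap {n : ℕ} {c : Equiv.Perm ℕ} {i j : ℕ} (hi : 1 ≤ i)
    (hij : i < j) (hjn : j ≤ n) (hc : c i < c j) : invNum n c < invNum n (c * Equiv.swap i j) := by
  set τ := Equiv.swap i j
  set S := {x ∈ Icc 1 n ×ˢ Icc 1 n | x.1 < x.2 ∧ c x.2 < c x.1}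
  set T := {x ∈ Icc 1 n ×ˢ Icc 1 n | x.1 < x.2 ∧ (c * τ) x.2 < (c * τ) x.1}
  have hijT : (i, j) ∈ T := by
    refine mem_filter.2 ⟨?_, hij, ?_⟩
    · simp only [mem_product, mem_Icc]; omega
    · simpa [τ] using hc
  -- An inversion of `c` is carried by `τ` to an inversion of `c * τ` unless `τ` reverses the
  -- order of its entries; this happens only for `(i, k)` and `(k, j)` with `i < k < j`,
  -- which are then already inversions of `c * τ`.
  let φ : ℕ × ℕ → ℕ × ℕ := fun x => if τ x.1 < τ x.2 then (τ x.1, τ x.2) else x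
  have hφ : #S ≤ #(T.erase (i, j)) := by
    refine card_le_card_of_injOn φ ?_ ?_
    · rintro ⟨p, q⟩ hx
      simp only [S, coe_filter, mem_product, mem_Icc] at hx
      simp only [φ, T, τ, coe_erase, Equiv.Perm.mul_apply]
      grind
    · rintro ⟨p, q⟩ hx ⟨p', q'⟩ hy hxy
      simp only [S, coe_filter] at hx hy
      grind [Equiv.swap_apply_self]
  have := card_erase_of_mem hijT
  have := card_pos.2 ⟨_, hijT⟩
  change #S < #T
  omega

lemma invNum_lt_invNum_mul_swap_iff {n : ℕ} {c : Equiv.Perm ℕ} {i j : ℕ} (hi : 1 ≤ i)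
    (hij : i < j) (hjn : j ≤ n) : invNum n c < invNum n (c * Equiv.swap i j) ↔ c i < c j := by
  refine ⟨fun h => ?_, invNum_lt_invNum_mul_swap hi hij hjn⟩
  by_contra hle
  have hji : (c * Equiv.swap i j) i < (c * Equiv.swap i j) j := by
    have : c i ≠ c j := c.injective.ne hij.ne
    simp only [Equiv.Perm.mul_apply, Equiv.swap_apply_left, Equiv.swap_apply_right]
    omega
  have := invNum_lt_invNum_mul_swap hi hij hjn hji
  rw [Equiv.mul_swap_mul_self] at this
  omega

section prefixCount

lemma prefixCount_succ (w : Equiv.Perm ℕ) (t m : ℕ) :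
    prefixCount w (t + 1) m = prefixCount w t m + if w (t + 1) < m then 1 else 0 := by
  simp only [prefixCount, card_filter]
  exact sum_Icc_succ_top (by omega) _

lemma prefixCount_eq_card_filter_image (w : Equiv.Perm ℕ) (t m : ℕ) :
    prefixCount w t m = #{r ∈ (Icc 1 t).image w | r < m} := by
  rw [filter_image, card_image_of_injective _ w.injective, prefixCount]

lemma prefixCount_congr {w w' : Equiv.Perm ℕ} {t : ℕ} (h : ∀ p ∈ Icc 1 t, w p = w' p) (m : ℕ) :
    prefixCount w t m = prefixCount w' t m := by
  simp only [prefixCount]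
  congr 1
  exact filter_congr fun p hp => by rw [h p hp]

lemma prefixCount_add_ite_of_eqOn {w w' : Equiv.Perm ℕ} {i t : ℕ} (hi : i ∈ Icc 1 t)
    (h : ∀ p ∈ Icc 1 t, p ≠ i → w p = w' p) (m : ℕ) :
    prefixCount w t m + (if w' i < m then 1 else 0) =
      prefixCount w' t m + (if w i < m then 1 else 0) := by
  simp only [prefixCount, card_filter]
  rw [← add_sum_erase _ _ hi, ← add_sum_erase _ _ hi,
    sum_congr rfl fun p hp => by rw [h p (mem_of_mem_erase hp) (ne_of_mem_erase hp)]]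
  omega

lemma prefixCount_add_card_filter (w : Equiv.Perm ℕ) (t : ℕ) {m m' : ℕ} (h : m ≤ m') :
    prefixCount w t m + #{p ∈ Icc 1 t | m ≤ w p ∧ w p < m'} = prefixCount w t m' := by
  unfold prefixCount
  rw [← card_union_of_disjoint (disjoint_filter.2 fun p _ h1 h2 => by omega), ← filter_or]
  congr 1
  exact filter_congr fun p _ => by omega

variable {a : Equiv.Perm ℕ} {i j t : ℕ}

lemma prefixCount_mul_swap_of_lt (hij : i < j) (hti : t < i) (m : ℕ) :
    prefixCount (a * Equiv.swap i j) t m = prefixCount a t m :=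
  prefixCount_congr (fun p hp => by
    rw [mem_Icc] at hp
    rw [Equiv.Perm.mul_apply, Equiv.swap_apply_of_ne_of_ne (by omega) (by omega)]) m

lemma prefixCount_mul_swap_of_le (hi : 1 ≤ i) (hij : i < j) (hjt : j ≤ t) (m : ℕ) :
    prefixCount (a * Equiv.swap i j) t m = prefixCount a t m := by
  unfold prefixCount
  refine card_nbij' (Equiv.swap i j) (Equiv.swap i j) ?_ ?_ (fun p _ => by simp)
    (fun p _ => by simp)
  all_goals
    intro p hp
    simp only [coe_filter, mem_Icc, Equiv.Perm.mul_apply] at hp ⊢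
    grind

lemma prefixCount_mul_swap_add_ite (hi : 1 ≤ i) (hit : i ≤ t) (htj : t < j) (m : ℕ) :
    prefixCount (a * Equiv.swap i j) t m + (if a i < m then 1 else 0) =
      prefixCount a t m + (if a j < m then 1 else 0) := by
  have h := prefixCount_add_ite_of_eqOn (w := a * Equiv.swap i j) (w' := a) (i := i)
    (mem_Icc.2 ⟨hi, hit⟩) (fun p hp hpi => by
      rw [mem_Icc] at hp
      rw [Equiv.Perm.mul_apply, Equiv.swap_apply_of_ne_of_ne hpi (by omega)]) m
  rwa [Equiv.Perm.mul_apply, Equiv.swap_apply_left] at h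

lemma prefixCount_mul_swap_le (hi : 1 ≤ i) (hij : i < j) (ha : a i < a j) (t m : ℕ) :
    prefixCount (a * Equiv.swap i j) t m ≤ prefixCount a t m := by
  rcases lt_or_ge t i with hti | hit
  · exact (prefixCount_mul_swap_of_lt hij hti m).le
  rcases le_or_gt j t with hjt | htj
  · exact (prefixCount_mul_swap_of_le hi hij hjt m).le
  have := prefixCount_mul_swap_add_ite hi hit htj m (a := a)
  split_ifs at this <;> omega

end prefixCount

lemma IsPermOn.prefixCount_eq {n : ℕ} {u v : Equiv.Perm ℕ} (hu : IsPermOn n u)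
    (hv : IsPermOn n v) (m : ℕ) : prefixCount u n m = prefixCount v n m := by
  rw [prefixCount_eq_card_filter_image, prefixCount_eq_card_filter_image, hu.image_Icc,
    hv.image_Icc]

lemma IsPermOn.prefixCount_of_lt {n t m : ℕ} {w : Equiv.Perm ℕ} (hw : IsPermOn n w) (ht : t ≤ n)
    (hm : n < m) : prefixCount w t m = t := by
  rw [prefixCount, filter_true_of_mem, Nat.card_Icc, Nat.add_sub_cancel]
  intro p hp
  have := mem_Icc.1 (hw.apply_mem_Icc (Icc_subset_Icc_right ht hp))
  omega

lemma tableauLE_of_bruhatLE {n : ℕ} {u v : Equiv.Perm ℕ} (h : BruhatLE n u v) :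
    TableauLE n u v := by
  induction h with
  | refl => exact fun _ _ _ => le_rfl
  | tail _ hstep ih =>
    obtain ⟨hlt, i, j, hi, hij, hjn, rfl⟩ := hstep
    exact fun t ht m => (prefixCount_mul_swap_le hi hij
      ((invNum_lt_invNum_mul_swap_iff hi hij hjn).1 hlt) t m).trans (ih t ht m)

section descents

variable {n m : ℕ} {u v : Equiv.Perm ℕ}

lemma prefixCount_le_of_apply_lt
    (hD : ∀ t, 1 ≤ t → t ≤ n - 1 → u (t + 1) < u t → prefixCount v t m ≤ prefixCount u t m) :
    ∀ t < n, (u (t + 1) < u t ∨ u t < m) → prefixCount v t m ≤ prefixCount u t m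
  | 0, _, _ => by simp [prefixCount]
  | s + 1, hs, hdesc_or_lt => by
    rcases hdesc_or_lt with hdesc | hlt
    · exact hD _ (by omega) (by omega) hdesc
    have ih := prefixCount_le_of_apply_lt hD s (by omega) (by omega)
    rw [prefixCount_succ, prefixCount_succ, if_pos hlt]
    split_ifs <;> omega

lemma prefixCount_le_of_le_apply_succ
    (hD : ∀ t, 1 ≤ t → t ≤ n - 1 → u (t + 1) < u t → prefixCount v t m ≤ prefixCount u t m)
    (hn : prefixCount v n m ≤ prefixCount u n m) {t : ℕ} (ht : t ≤ n) :
    (u (t + 1) < u t ∨ m ≤ u (t + 1)) → prefixCount v t m ≤ prefixCount u t m := by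
  refine Nat.decreasingInduction (motive := fun t _ =>
    (u (t + 1) < u t ∨ m ≤ u (t + 1)) → prefixCount v t m ≤ prefixCount u t m)
    (fun k hk ih => ?_) (fun _ => hn) ht
  rintro (hdesc | hle)
  · rcases Nat.eq_zero_or_pos k with rfl | hk0
    · simp [prefixCount]
    · exact hD k hk0 (by omega) hdesc
  have ih' := ih (by omega)
  have hv := prefixCount_succ v k m
  rw [prefixCount_succ u, if_neg (by omega)] at ih'
  split_ifs at hv <;> omega

lemma prefixCount_le_of_descents
    (hD : ∀ t, 1 ≤ t → t ≤ n - 1 → u (t + 1) < u t → prefixCount v t m ≤ prefixCount u t m)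
    (hn : prefixCount v n m ≤ prefixCount u n m) {t : ℕ} (ht : t ≤ n) :
    prefixCount v t m ≤ prefixCount u t m := by
  by_cases h : u (t + 1) < u t ∨ m ≤ u (t + 1)
  · exact prefixCount_le_of_le_apply_succ hD hn ht h
  rcases ht.eq_or_lt with rfl | htn
  · exact hn
  exact prefixCount_le_of_apply_lt hD t htn (by omega)

end descents

lemma tableauLE_of_descents {n : ℕ} {u v : Equiv.Perm ℕ} (hu : IsPermOn n u)
    (hv : IsPermOn n v)
    (hD : ∀ m, 1 ≤ m → m ≤ n → ∀ t, 1 ≤ t → t ≤ n - 1 → u (t + 1) < u t →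
      prefixCount v t m ≤ prefixCount u t m) :
    TableauLE n u v := by
  intro t ht m
  rcases Nat.eq_zero_or_pos m with rfl | hm
  · simp [prefixCount]
  rcases le_or_gt m n with hmn | hnm
  · exact prefixCount_le_of_descents (hD m hm hmn) (hu.prefixCount_eq hv m).ge ht
  · rw [hu.prefixCount_of_lt ht hnm, hv.prefixCount_of_lt ht hnm]

section raising

variable {u v : Equiv.Perm ℕ} {i : ℕ}

lemma apply_lt_of_prefixCount_le (hi : 1 ≤ i) (hagree : ∀ p < i, u p = v p) (hne : u i ≠ v i)
    (h : prefixCount v i (u i) ≤ prefixCount u i (u i)) : u i < v i := by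
  have hsucc : i - 1 + 1 = i := by omega
  have hu := prefixCount_succ u (i - 1) (u i)
  have hv := prefixCount_succ v (i - 1) (u i)
  have hprefix : prefixCount u (i - 1) (u i) = prefixCount v (i - 1) (u i) :=
    prefixCount_congr (fun p hp => hagree p (by grind)) _
  rw [hsucc] at hu hv
  split_ifs at hu hv <;> omega

lemma prefixCount_lt_of_gap {t m : ℕ} (hi : i ∈ Icc 1 t) (hagree : ∀ p < i, u p = v p)
    (hum : u i < m) (hmv : m ≤ v i) (hgap : ∀ p, i < p → p ≤ t → ¬ (u i < u p ∧ u p ≤ v i))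
    (hcrit : prefixCount v t (v i + 1) ≤ prefixCount u t (v i + 1)) :
    prefixCount v t m < prefixCount u t m := by
  -- On `[1, t]`, `u` takes values in `[m, v i]` only before `i`, where `u = v`.
  have hsub : {p ∈ Icc 1 t | m ≤ u p ∧ u p < v i + 1} ⊂
      {p ∈ Icc 1 t | m ≤ v p ∧ v p < v i + 1} := by
    rw [ssubset_iff_of_subset]
    · exact ⟨i, mem_filter.2 ⟨hi, by omega⟩, fun h => by rw [mem_filter] at h; omega⟩
    · intro p hp
      simp only [mem_filter, mem_Icc] at hp ⊢
      have hpi : p < i := by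
        by_contra! hip
        rcases hip.eq_or_lt with rfl | h
        · omega
        · exact hgap p h hp.1.2 (by omega)
      rw [← hagree p hpi]
      exact hp
  have hu := prefixCount_add_card_filter u t (m := m) (m' := v i + 1) (by omega)
  have hv := prefixCount_add_card_filter v t (m := m) (m' := v i + 1) (by omega)
  have := card_lt_card hsub
  omega

lemma tableauLE_mul_swap {n j : ℕ} (huv : TableauLE n u v) (hi : 1 ≤ i) (hij : i < j)
    (hagree : ∀ p < i, u p = v p) (hjv : u j ≤ v i)
    (hgap : ∀ p, i < p → p < j → ¬ (u i < u p ∧ u p ≤ v i)) :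
    TableauLE n (u * Equiv.swap i j) v := by
  intro t ht m
  rcases lt_or_ge t i with hti | hit
  · rw [prefixCount_mul_swap_of_lt hij hti]
    exact huv t ht m
  rcases le_or_gt j t with hjt | htj
  · rw [prefixCount_mul_swap_of_le hi hij hjt]
    exact huv t ht m
  have hswap := prefixCount_mul_swap_add_ite (a := u) hi hit htj m
  have hcrit := huv t ht m
  by_cases hm : u i < m ∧ m ≤ u j
  · have := prefixCount_lt_of_gap (mem_Icc.2 ⟨hi, hit⟩) hagree hm.1 (hm.2.trans hjv)
      (fun p hip hpt => hgap p hip (by omega)) (huv t ht (v i + 1))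
    rw [if_pos hm.1, if_neg (by omega)] at hswap
    omega
  · split_ifs at hswap <;> omega

lemma exists_mul_swap_tableauLE {n : ℕ} (hu : IsPermOn n u) (hv : IsPermOn n v)
    (huv : TableauLE n u v) (hne : u ≠ v) :
    ∃ i j, 1 ≤ i ∧ i < j ∧ j ≤ n ∧ u i < u j ∧ TableauLE n (u * Equiv.swap i j) v := by
  classical
  have hdiff : ∃ p, u p ≠ v p := by
    by_contra! h
    exact hne (Equiv.ext h)
  obtain ⟨i, hne_i, hagree⟩ : ∃ i, u i ≠ v i ∧ ∀ p < i, u p = v p :=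
    ⟨Nat.find hdiff, Nat.find_spec hdiff, fun p hp => not_not.1 (Nat.find_min hdiff hp)⟩
  have hi := mem_Icc.1 (hu.mem_Icc_of_apply_ne hv hne_i)
  have hlt : u i < v i := apply_lt_of_prefixCount_le hi.1 hagree hne_i (huv i hi.2 (u i))
  have hq : i < u⁻¹ (v i) ∧ u i < u (u⁻¹ (v i)) ∧ u (u⁻¹ (v i)) ≤ v i := by
    refine ⟨?_, by simpa using hlt, by simp⟩
    by_contra! hle
    rcases hle.eq_or_lt with heq | hlt'
    · exact hne_i (by simpa using (congrArg u heq).symm)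
    · have := hagree _ hlt'
      simp only [Equiv.Perm.coe_inv, Equiv.apply_symm_apply] at this
      exact hlt'.ne (v.injective this.symm)
  have hqn := mem_Icc.1 (hu.inv.apply_mem_Icc (hv.apply_mem_Icc (mem_Icc.2 hi)))
  have hpos : ∃ p, i < p ∧ u i < u p ∧ u p ≤ v i := ⟨_, hq⟩
  obtain ⟨j, ⟨hij, huj, hjv⟩, hjmin⟩ : ∃ j, (i < j ∧ u i < u j ∧ u j ≤ v i) ∧
      ∀ p < j, ¬ (i < p ∧ u i < u p ∧ u p ≤ v i) :=
    ⟨Nat.find hpos, Nat.find_spec hpos, fun p hp => Nat.find_min hpos hp⟩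
  have hjn : j ≤ n := by
    by_contra
    exact hjmin _ (by omega) hq
  exact ⟨i, j, hi.1, hij, hjn, huj, tableauLE_mul_swap huv hi.1 hij hagree hjv
    fun p hip hpj h => hjmin p hpj ⟨hip, h⟩⟩

end raising

lemma bruhatLE_of_tableauLE {n : ℕ} {u v : Equiv.Perm ℕ} (hu : IsPermOn n u)
    (hv : IsPermOn n v) (huv : TableauLE n u v) : BruhatLE n u v := by
  by_cases hne : u = v
  · exact hne ▸ .refl
  obtain ⟨i, j, hi, hij, hjn, hlt, huv'⟩ := exists_mul_swap_tableauLE hu hv huv hne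
  have hlen := invNum_lt_invNum_mul_swap hi hij hjn hlt
  have := invNum_le n (u * Equiv.swap i j)
  exact .head ⟨hlen, i, j, hi, hij, hjn, rfl⟩ (bruhatLE_of_tableauLE
    (hu.mul_swap (mem_Icc.2 ⟨hi, by omega⟩) (mem_Icc.2 ⟨by omega, hjn⟩)) hv huv')
termination_by n * n - invNum n u

/-- Bruhat order via the counting criterion over right descents `s_t` of `u`. -/
theorem bruhat_iff_counts_descents (n : ℕ) (u v : Equiv.Perm ℕ)
    (hu : IsPermOn n u) (hv : IsPermOn n v) :
    BruhatLE n u v ↔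
      ∀ j, 1 ≤ j → j ≤ n → ∀ t, 1 ≤ t → t ≤ n - 1 → u (t + 1) < u t →
        (((Finset.Icc 1 t).image v).filter (fun r => r < j)).card ≤
        (((Finset.Icc 1 t).image u).filter (fun r => r < j)).card := by
  simp only [← prefixCount_eq_card_filter_image]
  exact ⟨fun h m _ _ t _ htn _ => tableauLE_of_bruhatLE h t (by omega) m,
    fun h => bruhatLE_of_tableauLE hu hv (tableauLE_of_descents hu hv h)⟩
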